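/- Let U be a finite set, 𝓕 a finite family of subsets of U whose union is U, k a natural number, and L a nonempty finite set. Let G be the simple graph on the disjoint union {r,p,q} ⊎ 𝓕 ⊎ U ⊎ L whose edges are: {r,p}; {r,F} for every F ∈ 𝓕; {F,u} for every F ∈ 𝓕 and every u ∈ F; and {q,x} for every x ∈ L. Then 𝓕 contains a subfamily of size at most k whose union is U if and only if G has a dominating set of size at most k+2. -/

import Mathlib

/-!
From a cover `I` one gets the dominating set `{r, q} ∪ I`. Conversely, a dominating set must
contain `p` or its only neighbour `r`, and a leaf or its only neighbour `q`; these two vertices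
lie outside the set and element vertices, and the at most `k` remaining set or element vertices
yield a cover by replacing each element vertex `u` with some set containing `u`.
-/

/-- The base relation of the graph built from a Set Cover instance:
    `r = Sum.inl 0`, `p = Sum.inl 1`, `q = Sum.inl 2`, set-vertices `Sum.inr (Sum.inl i)`,
    element-vertices `Sum.inr (Sum.inr (Sum.inl u))`, star leaves `Sum.inr (Sum.inr (Sum.inr x))`.
    Edges (after symmetrization by `SimpleGraph.fromRel`): {r,p}; {r,F_i} for all i;
    {F_i,u} whenever u ∈ F i; {q,x} for every leaf x. -/
def scdsRel {ι U L : Type*} (F : ι → Set U) :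
    (Fin 3 ⊕ ι ⊕ U ⊕ L) → (Fin 3 ⊕ ι ⊕ U ⊕ L) → Prop
  | Sum.inl ⟨0, _⟩, Sum.inl ⟨1, _⟩ => True
  | Sum.inl ⟨0, _⟩, Sum.inr (Sum.inl _) => True
  | Sum.inr (Sum.inl i), Sum.inr (Sum.inr (Sum.inl u)) => u ∈ F i
  | Sum.inl ⟨2, _⟩, Sum.inr (Sum.inr (Sum.inr _)) => True
  | _, _ => False

namespace SimpleGraph

variable {V : Type*}

def IsDominatingSet (G : SimpleGraph V) (S : Set V) : Prop :=
  ∀ v, v ∈ S ∨ ∃ u ∈ S, G.Adj v u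

theorem IsDominatingSet.mem_or_mem_of_neighborSet_eq_singleton {G : SimpleGraph V} {S : Set V}
    (hS : G.IsDominatingSet S) {v w : V} (hv : G.neighborSet v = {w}) : v ∈ S ∨ w ∈ S := by
  rcases hS v with h | ⟨u, hu, hadj⟩
  · exact .inl h
  · rw [← mem_neighborSet, hv, Set.mem_singleton_iff] at hadj
    exact .inr (hadj ▸ hu)

end SimpleGraph

theorem Set.ncard_preimage_add_ncard_le {α β : Type*} {f : α → β} (hf : f.Injective)
    {S T : Set β} (hS : S.Finite) (hTS : T ⊆ S) (hT : Disjoint T (Set.range f)) :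
    (f ⁻¹' S).ncard + T.ncard ≤ S.ncard := by
  have hdisj : Disjoint (f '' (f ⁻¹' S)) T :=
    hT.symm.mono_left (Set.image_subset_range _ _)
  rw [← Set.ncard_image_of_injective _ hf,
    ← Set.ncard_union_eq hdisj ((hS.preimage hf.injOn).image f) (hS.subset hTS)]
  exact Set.ncard_le_ncard (Set.union_subset (Set.image_preimage_subset f S) hTS) hS

namespace SetCoverGraph

variable {ι U L : Type*}

abbrev Vertex (ι U L : Type*) := Fin 3 ⊕ ι ⊕ U ⊕ L

abbrev graph (F : ι → Set U) : SimpleGraph (Vertex ι U L) :=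
  SimpleGraph.fromRel (scdsRel F)

-- `Fin.mk` literals, so that the matcher of `scdsRel` reduces on these vertices.
def r : Vertex ι U L := .inl ⟨0, by decide⟩
def p : Vertex ι U L := .inl ⟨1, by decide⟩
def q : Vertex ι U L := .inl ⟨2, by decide⟩
def setV (i : ι) : Vertex ι U L := .inr (.inl i)
def elemV (u : U) : Vertex ι U L := .inr (.inr (.inl u))
def leafV (x : L) : Vertex ι U L := .inr (.inr (.inr x))

variable {F : ι → Set U}

theorem adj_p_iff {v : Vertex ι U L} : (graph F).Adj p v ↔ v = r := by
  rcases v with ⟨_ | _ | _ | m, hm⟩ | i | u | x <;>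
    simp only [SimpleGraph.fromRel_adj, scdsRel, p, r] <;> simp [Fin.ext_iff]

theorem adj_leafV_iff {x : L} {v : Vertex ι U L} : (graph F).Adj (leafV x) v ↔ v = q := by
  rcases v with ⟨_ | _ | _ | m, hm⟩ | i | u | x <;>
    simp only [SimpleGraph.fromRel_adj, scdsRel, leafV, q] <;> simp [Fin.ext_iff]

theorem adj_elemV_iff {u : U} {v : Vertex ι U L} :
    (graph F).Adj (elemV u) v ↔ ∃ i, u ∈ F i ∧ v = setV i := by
  rcases v with ⟨_ | _ | _ | m, hm⟩ | i | u | x <;>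
    simp only [SimpleGraph.fromRel_adj, scdsRel, elemV, setV] <;> simp

theorem adj_setV_r (i : ι) : (graph (L := L) F).Adj (setV i) r := by
  simp only [SimpleGraph.fromRel_adj, scdsRel, setV, r]
  simp

def setElemV : ι ⊕ U → Vertex ι U L := Sum.elim setV elemV

theorem setElemV_injective : (setElemV : ι ⊕ U → Vertex ι U L).Injective := by
  rintro (a | a) (b | b) h <;> simp_all [setElemV, setV, elemV]

theorem isDominatingSet_of_cover {I : Set ι} (hI : ∀ u, ∃ i ∈ I, u ∈ F i) :
    (graph (L := L) F).IsDominatingSet (insert r (insert q (setV '' I))) := by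
  rintro (⟨_ | _ | _ | m, hm⟩ | i | u | x)
  · exact .inl (.inl rfl)
  · exact .inr ⟨r, .inl rfl, adj_p_iff.2 rfl⟩
  · exact .inl (.inr (.inl rfl))
  · omega
  · exact .inr ⟨r, .inl rfl, adj_setV_r i⟩
  · obtain ⟨i, hiI, hui⟩ := hI u
    exact .inr ⟨setV i, .inr (.inr ⟨i, hiI, rfl⟩), adj_elemV_iff.2 ⟨i, hui, rfl⟩⟩
  · exact .inr ⟨q, .inr (.inl rfl), adj_leafV_iff.2 rfl⟩

theorem ncard_preimage_setElemV_add_two_le [Nonempty L] {S : Set (Vertex ι U L)}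
    (hS : (graph F).IsDominatingSet S) (hfin : S.Finite) :
    (setElemV ⁻¹' S).ncard + 2 ≤ S.ncard := by
  obtain ⟨x⟩ := ‹Nonempty L›
  obtain ⟨a, haS, ha⟩ : ∃ a ∈ S, a = p ∨ a = r := by
    rcases hS.mem_or_mem_of_neighborSet_eq_singleton (Set.ext fun _ => adj_p_iff) with h | h
    exacts [⟨_, h, .inl rfl⟩, ⟨_, h, .inr rfl⟩]
  obtain ⟨b, hbS, hb⟩ : ∃ b ∈ S, b = leafV x ∨ b = q := by
    rcases hS.mem_or_mem_of_neighborSet_eq_singleton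
      (Set.ext fun _ => adj_leafV_iff (x := x)) with h | h
    exacts [⟨_, h, .inl rfl⟩, ⟨_, h, .inr rfl⟩]
  have hab : a ≠ b := by
    rcases ha with rfl | rfl <;> rcases hb with rfl | rfl <;> simp [p, r, q, leafV]
  have hdisj : Disjoint ({a, b} : Set (Vertex ι U L)) (Set.range setElemV) := by
    rw [Set.disjoint_insert_left, Set.disjoint_singleton_left]
    rcases ha with rfl | rfl <;> rcases hb with rfl | rfl <;>
      simp [setElemV, p, r, q, leafV, setV, elemV]
  simpa [Set.ncard_pair hab] using Set.ncard_preimage_add_ncard_le setElemV_injective hfin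
    (Set.insert_subset haS (Set.singleton_subset_iff.2 hbS)) hdisj

theorem exists_cover_of_isDominatingSet (hcover : ∀ u, ∃ i, u ∈ F i) {S : Set (Vertex ι U L)}
    (hS : (graph F).IsDominatingSet S) (hfin : S.Finite) :
    ∃ I : Finset ι, I.card ≤ (setElemV ⁻¹' S).ncard ∧ ∀ u, ∃ i ∈ I, u ∈ F i := by
  classical
  choose g hg using hcover
  have hC := hfin.preimage setElemV_injective.injOn
  refine ⟨hC.toFinset.image (Sum.elim id g), ?_, fun u => ?_⟩
  · rw [Set.ncard_eq_toFinset_card _ hC]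
    exact Finset.card_image_le
  rcases hS (elemV u) with h | ⟨w, hwS, hadj⟩
  · exact ⟨g u, Finset.mem_image.2 ⟨.inr u, by simpa [setElemV] using h, rfl⟩, hg u⟩
  · obtain ⟨i, hui, rfl⟩ := adj_elemV_iff.1 hadj
    exact ⟨i, Finset.mem_image.2 ⟨.inl i, by simpa [setElemV] using hwS, rfl⟩, hui⟩

end SetCoverGraph

open SetCoverGraph in
theorem stmt_12_general {ι U L : Type*} [Nonempty L]
    (F : ι → Set U) (hcover : ∀ u : U, ∃ i, u ∈ F i) (k : ℕ) :
    (∃ I : Finset ι, I.card ≤ k ∧ ∀ u : U, ∃ i ∈ I, u ∈ F i) ↔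
    (∃ S : Set (Fin 3 ⊕ ι ⊕ U ⊕ L), S.Finite ∧ S.ncard ≤ k + 2 ∧
      ∀ v, v ∈ S ∨ ∃ u ∈ S, (SimpleGraph.fromRel (scdsRel (L := L) F)).Adj v u) := by
  constructor
  · rintro ⟨I, hIk, hI⟩
    refine ⟨insert r (insert q (setV '' I)), ((I.finite_toSet.image _).insert _).insert _, ?_,
      isDominatingSet_of_cover hI⟩
    grw [Set.ncard_insert_le, Set.ncard_insert_le, Set.ncard_image_le I.finite_toSet,
      Set.ncard_coe_finset]
    omega
  · rintro ⟨S, hfin, hSk, hS⟩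
    obtain ⟨I, hI, hIcover⟩ := exists_cover_of_isDominatingSet hcover hS hfin
    exact ⟨I, by linarith [ncard_preimage_setElemV_add_two_le hS hfin], hIcover⟩

theorem stmt_12 {ι U L : Type*} [Fintype ι] [Fintype U] [Fintype L] [Nonempty L]
    (F : ι → Set U) (hcover : ∀ u : U, ∃ i, u ∈ F i) (k : ℕ) :
    (∃ I : Finset ι, I.card ≤ k ∧ ∀ u : U, ∃ i ∈ I, u ∈ F i) ↔
    (∃ S : Set (Fin 3 ⊕ ι ⊕ U ⊕ L), S.Finite ∧ S.ncard ≤ k + 2 ∧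
      ∀ v, v ∈ S ∨ ∃ u ∈ S, (SimpleGraph.fromRel (scdsRel (L := L) F)).Adj v u) :=
  stmt_12_general F hcover k
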